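/- Let p ∈ (0,1) and let K be a CRG whose vertex set is partitioned into nonempty sets S_1, …, S_ℓ such that every edge of K joining vertices in distinct parts is gray. Let K^{(i)} denote the sub-CRG induced on S_i. Then all the quantities g_K(p), g_{K^{(1)}}(p), …, g_{K^{(ℓ)}}(p) are positive and 1/g_K(p) = Σ_{i=1}^{ℓ} 1/g_{K^{(i)}}(p). -/

import Mathlib

/-! Gray edges contribute nothing to `xᵀ M_K(p) x`, so the quadratic form splits into the
forms of the parts. If the part `S_i` carries mass `λ_i`, its contribution is at least
`g_i λ_i²` (with `g_i = g_{K^{(i)}}(p)`), and by Cauchy–Schwarz (Sedrakyan's lemma)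
`∑ g_i λ_i² ≥ (∑ 1/g_i)⁻¹`. Equality is attained by gluing optimal weight vectors of the parts
with masses `λ_i ∝ 1/g_i`; optimal vectors exist because the simplex is compact. -/

/-- Colors for edges of a colored regularity graph. -/
inductive EColor : Type
  | white
  | gray
  | black
deriving DecidableEq

/-- A colored regularity graph (CRG) on a finite vertex type `V`: each vertex is
white or black (`vWhite v = true` means white), and each pair of distinct vertices
gets a symmetric edge color (white, gray or black). -/
structure CRG (V : Type) [Fintype V] where
  vWhite : V → Bool
  ecolor : V → V → EColor
  ecolor_symm : ∀ u v, ecolor u v = ecolor v u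

namespace CRG

variable {V : Type} [Fintype V] [DecidableEq V]

/-- The matrix `M_K(p)`. -/
noncomputable def M (K : CRG V) (p : ℝ) (u v : V) : ℝ :=
  if u = v then (if K.vWhite u then p else 1 - p)
  else
    match K.ecolor u v with
    | EColor.white => p
    | EColor.black => 1 - p
    | EColor.gray => 0

/-- The function `g_K(p)`: the minimum of `xᵀ M_K(p) x` over nonnegative weight
vectors summing to `1`. -/
noncomputable def g (K : CRG V) (p : ℝ) : ℝ :=
  sInf {r : ℝ | ∃ x : V → ℝ, (∀ v, 0 ≤ x v) ∧ (∑ v, x v) = 1 ∧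
    r = ∑ u, ∑ v, x u * K.M p u v * x v}

/-- The sub-CRG induced on a subset `s` of the vertices. -/
def sub (K : CRG V) (s : Finset V) : CRG {v // v ∈ s} where
  vWhite := fun v => K.vWhite v.1
  ecolor := fun u v => K.ecolor u.1 v.1
  ecolor_symm := fun u v => K.ecolor_symm u.1 v.1

/-- `K` is `p`-core if `g_K(p) < g_{K'}(p)` for every proper (nonempty) sub-CRG `K'`. -/
def IsPCore (K : CRG V) (p : ℝ) : Prop :=
  ∀ s : Finset V, s.Nonempty → s ≠ Finset.univ → K.g p < (K.sub s).g p

/-- `x` is an optimal weight vector for `K` at `p`. -/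
def IsOptWeight (K : CRG V) (p : ℝ) (x : V → ℝ) : Prop :=
  (∀ v, 0 ≤ x v) ∧ (∑ v, x v) = 1 ∧
    (∑ u, ∑ v, x u * K.M p u v * x v) = K.g p

/-- The gray degree `d_G(v)`: total weight of gray neighbors of `v`. -/
noncomputable def dG (K : CRG V) (x : V → ℝ) (v : V) : ℝ :=
  ∑ w ∈ Finset.univ.filter fun w => w ≠ v ∧ K.ecolor v w = EColor.gray, x w

/-- The white degree `d_W(v)`: total weight of white neighbors of `v`, including `v`
itself if `v` is white. -/
noncomputable def dW (K : CRG V) (x : V → ℝ) (v : V) : ℝ :=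
  (∑ w ∈ Finset.univ.filter fun w => w ≠ v ∧ K.ecolor v w = EColor.white, x w) +
    (if K.vWhite v then x v else 0)

/-- The black degree `d_B(v)`: total weight of black neighbors of `v`, including `v`
itself if `v` is black. -/
noncomputable def dB (K : CRG V) (x : V → ℝ) (v : V) : ℝ :=
  (∑ w ∈ Finset.univ.filter fun w => w ≠ v ∧ K.ecolor v w = EColor.black, x w) +
    (if K.vWhite v then 0 else x v)

/-- The number of gray neighbors of `v`. -/
def grayDeg (K : CRG V) (v : V) : ℕ :=
  (Finset.univ.filter fun w => w ≠ v ∧ K.ecolor v w = EColor.gray).card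

end CRG

/-- A graph `H` embeds in a CRG `K`, written `H ↦ K`. -/
def EmbedsIn {α : Type*} {V : Type} [Fintype V] (H : SimpleGraph α) (K : CRG V) : Prop :=
  ∃ φ : α → V,
    (∀ a b : α, H.Adj a b →
      (φ a = φ b ∧ K.vWhite (φ a) = false) ∨
      (φ a ≠ φ b ∧ (K.ecolor (φ a) (φ b) = EColor.black ∨ K.ecolor (φ a) (φ b) = EColor.gray))) ∧
    (∀ a b : α, a ≠ b → ¬H.Adj a b →
      (φ a = φ b ∧ K.vWhite (φ a) = true) ∨
      (φ a ≠ φ b ∧ (K.ecolor (φ a) (φ b) = EColor.white ∨ K.ecolor (φ a) (φ b) = EColor.gray)))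

open Finset Function

theorem inv_sum_inv_le_sum_mul_sq {ι : Type*} (s : Finset ι) {g w : ι → ℝ}
    (hg : ∀ i ∈ s, 0 < g i) (hw : ∑ i ∈ s, w i = 1) :
    (∑ i ∈ s, (g i)⁻¹)⁻¹ ≤ ∑ i ∈ s, g i * w i ^ 2 := by
  have h := sq_sum_div_le_sum_sq_div s w fun i hi => inv_pos.2 (hg i hi)
  simpa only [hw, one_pow, one_div, div_inv_eq_mul, mul_comm (w _ ^ 2)] using h

theorem sum_mul_sq_inv_div_sum_inv {ι : Type*} (s : Finset ι) {g : ι → ℝ}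
    (hg : ∀ i ∈ s, g i ≠ 0) :
    ∑ i ∈ s, g i * ((g i)⁻¹ / ∑ j ∈ s, (g j)⁻¹) ^ 2 = (∑ i ∈ s, (g i)⁻¹)⁻¹ := by
  set T := ∑ j ∈ s, (g j)⁻¹
  have hterm : ∀ i ∈ s, g i * ((g i)⁻¹ / T) ^ 2 = (g i)⁻¹ / T ^ 2 := fun i hi => by
    field_simp [hg i hi]
  rw [sum_congr rfl hterm, ← sum_div, sq, div_self_mul_self']

namespace CRG

variable {W : Type} [Fintype W] [DecidableEq W]

noncomputable def quad (K : CRG W) (p : ℝ) (x : W → ℝ) : ℝ :=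
  ∑ u, ∑ v, x u * K.M p u v * x v

section
variable (K : CRG W) (p : ℝ)

theorem g_eq_sInf_image_stdSimplex : K.g p = sInf (K.quad p '' stdSimplex ℝ W) := by
  simp only [g, quad, Set.image, stdSimplex, Set.mem_ofPred_eq, eq_comm (a := (_ : ℝ))]
  congr 1; ext r; simp only [Set.mem_ofPred_eq, and_assoc]

theorem continuous_quad : Continuous (K.quad p) := by
  unfold quad; fun_prop

theorem g_le_quad {x : W → ℝ} (hx : x ∈ stdSimplex ℝ W) : K.g p ≤ K.quad p x := by
  rw [g_eq_sInf_image_stdSimplex]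
  exact csInf_le ((isCompact_stdSimplex ℝ W).image (K.continuous_quad p)).bddBelow
    (Set.mem_image_of_mem _ hx)

theorem exists_quad_eq_g [Nonempty W] : ∃ x ∈ stdSimplex ℝ W, K.quad p x = K.g p := by
  rw [g_eq_sInf_image_stdSimplex]
  exact ((isCompact_stdSimplex ℝ W).image (K.continuous_quad p)).sInf_mem
    ⟨_, Set.mem_image_of_mem _ (single_mem_stdSimplex ℝ (Classical.arbitrary W))⟩

theorem quad_smul (c : ℝ) (x : W → ℝ) : K.quad p (c • x) = c ^ 2 * K.quad p x := by
  simp only [quad, Pi.smul_apply, smul_eq_mul, mul_sum]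
  exact sum_congr rfl fun u _ => sum_congr rfl fun v _ => by ring

theorem g_mul_sq_sum_le_quad {x : W → ℝ} (hx : 0 ≤ x) :
    K.g p * (∑ v, x v) ^ 2 ≤ K.quad p x := by
  rcases (sum_nonneg fun v _ => hx v).eq_or_lt with hs | hs
  · have hx0 : x = 0 := funext fun v =>
      (sum_eq_zero_iff_of_nonneg fun v _ => hx v).1 hs.symm v (mem_univ v)
    simp [hx0, quad]
  · have hmem : (∑ v, x v)⁻¹ • x ∈ stdSimplex ℝ W :=
      ⟨fun v => mul_nonneg (inv_nonneg.2 hs.le) (hx v), by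
        simp only [Pi.smul_apply, smul_eq_mul, ← mul_sum, inv_mul_cancel₀ hs.ne']⟩
    have h := K.g_le_quad p hmem
    rw [quad_smul, inv_pow, ← div_eq_inv_mul, le_div_iff₀ (by positivity)] at h
    exact h

theorem M_nonneg (hp : p ∈ Set.Icc 0 1) (u v : W) : 0 ≤ K.M p u v := by
  obtain ⟨h0, h1⟩ := hp
  unfold M
  split_ifs
  · exact h0
  · linarith
  · cases K.ecolor u v <;> dsimp only <;> linarith

theorem M_self_pos (hp : p ∈ Set.Ioo 0 1) (u : W) : 0 < K.M p u u := by
  obtain ⟨h0, h1⟩ := hp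
  simp only [M, if_true]
  split_ifs <;> linarith

theorem quad_pos (hp : p ∈ Set.Ioo 0 1) {x : W → ℝ} (hx : 0 ≤ x) (hx0 : x ≠ 0) :
    0 < K.quad p x := by
  obtain ⟨u, hu⟩ := Function.ne_iff.1 hx0
  have hterm : ∀ u v, 0 ≤ x u * K.M p u v * x v := fun u v =>
    mul_nonneg (mul_nonneg (hx u) (K.M_nonneg p (Set.Ioo_subset_Icc_self hp) u v)) (hx v)
  calc 0 < x u * K.M p u u * x u :=
        mul_pos (mul_pos ((hx u).lt_of_ne' hu) (K.M_self_pos p hp u)) ((hx u).lt_of_ne' hu)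
    _ ≤ ∑ v, x u * K.M p u v * x v := single_le_sum (fun v _ => hterm u v) (mem_univ u)
    _ ≤ K.quad p x :=
        single_le_sum (f := fun u => ∑ v, x u * K.M p u v * x v)
          (fun u _ => sum_nonneg fun v _ => hterm u v) (mem_univ u)

theorem g_pos [Nonempty W] (hp : p ∈ Set.Ioo 0 1) : 0 < K.g p := by
  obtain ⟨x, hx, hq⟩ := K.exists_quad_eq_g p
  refine hq ▸ K.quad_pos p hp hx.1 fun h => ?_
  simpa [h] using hx.2

end

section Partition

variable {V : Type} [Fintype V] [DecidableEq V] {ι : Type*} [Fintype ι]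

theorem sub_M (K : CRG V) (s : Finset V) (p : ℝ) (u v : s) : (K.sub s).M p u v = K.M p u v := by
  simp only [M, sub, Subtype.ext_iff]
  congr

theorem sub_quad (K : CRG V) (s : Finset V) (p : ℝ) (y : V → ℝ) :
    (K.sub s).quad p (fun u => y u) = ∑ u ∈ s, ∑ v ∈ s, y u * K.M p u v * y v := by
  simp only [quad, sub_M]
  rw [← sum_coe_sort s]
  exact sum_congr rfl fun u _ => sum_coe_sort s (fun v => y u * K.M p u v * y v)

theorem M_eq_zero_of_gray (K : CRG V) (p : ℝ) {u v : V} (huv : u ≠ v)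
    (h : K.ecolor u v = EColor.gray) : K.M p u v = 0 := by
  simp only [M, if_neg huv, h]

theorem sum_eq_sum_sum_parts {β : Type*} [AddCommMonoid β] {S : ι → Finset V}
    (hdisj : Pairwise (Disjoint on S)) (hcover : ∀ v, ∃ i, v ∈ S i) (f : V → β) :
    ∑ v, f v = ∑ i, ∑ v ∈ S i, f v := by
  have huniv : (univ : Finset V) = univ.biUnion S :=
    (eq_univ_of_forall fun v => mem_biUnion.2 <| (hcover v).imp fun i hi => ⟨mem_univ i, hi⟩).symm
  rw [huniv, sum_biUnion fun i _ j _ hij => hdisj hij]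

theorem quad_eq_sum_sub_quad (K : CRG V) (p : ℝ) {S : ι → Finset V}
    (hdisj : Pairwise (Disjoint on S)) (hcover : ∀ v, ∃ i, v ∈ S i)
    (hgray : ∀ i j, i ≠ j → ∀ u ∈ S i, ∀ v ∈ S j, K.ecolor u v = EColor.gray) (y : V → ℝ) :
    K.quad p y = ∑ i, (K.sub (S i)).quad p (fun u => y u) := by
  simp only [sub_quad]
  rw [quad, sum_eq_sum_sum_parts hdisj hcover]
  refine sum_congr rfl fun i _ => sum_congr rfl fun u hu => ?_
  rw [sum_eq_sum_sum_parts hdisj hcover]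
  refine sum_eq_single i (fun j _ hji => sum_eq_zero fun v hv => ?_) (by simp)
  have huv : u ≠ v := fun h => disjoint_left.1 (hdisj hji.symm) hu (h ▸ hv)
  rw [M_eq_zero_of_gray K p huv (hgray i j hji.symm u hu v hv), mul_zero, zero_mul]

theorem inv_sum_inv_g_sub_le_g [Nonempty V] (K : CRG V) {p : ℝ} (hp : p ∈ Set.Ioo 0 1)
    {S : ι → Finset V} (hne : ∀ i, (S i).Nonempty) (hdisj : Pairwise (Disjoint on S))
    (hcover : ∀ v, ∃ i, v ∈ S i)
    (hgray : ∀ i j, i ≠ j → ∀ u ∈ S i, ∀ v ∈ S j, K.ecolor u v = EColor.gray) :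
    (∑ i, ((K.sub (S i)).g p)⁻¹)⁻¹ ≤ K.g p := by
  obtain ⟨x, hx, hq⟩ := K.exists_quad_eq_g p
  have hmass : ∑ i, ∑ u : S i, x u = 1 := by
    simp only [sum_coe_sort]
    rw [← sum_eq_sum_sum_parts hdisj hcover, hx.2]
  have hg : ∀ i ∈ univ, 0 < (K.sub (S i)).g p := fun i _ =>
    have := (hne i).to_subtype
    (K.sub (S i)).g_pos p hp
  calc (∑ i, ((K.sub (S i)).g p)⁻¹)⁻¹
      ≤ ∑ i, (K.sub (S i)).g p * (∑ u : S i, x u) ^ 2 := inv_sum_inv_le_sum_mul_sq _ hg hmass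
    _ ≤ ∑ i, (K.sub (S i)).quad p (fun u => x u) :=
        sum_le_sum fun i _ => (K.sub (S i)).g_mul_sq_sum_le_quad p fun u => hx.1 u
    _ = K.g p := by rw [← quad_eq_sum_sub_quad K p hdisj hcover hgray, hq]

theorem g_le_sum_g_sub_mul_sq (K : CRG V) (p : ℝ) {S : ι → Finset V}
    (hne : ∀ i, (S i).Nonempty) (hdisj : Pairwise (Disjoint on S))
    (hcover : ∀ v, ∃ i, v ∈ S i)
    (hgray : ∀ i j, i ≠ j → ∀ u ∈ S i, ∀ v ∈ S j, K.ecolor u v = EColor.gray)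
    {w : ι → ℝ} (hw : w ∈ stdSimplex ℝ ι) :
    K.g p ≤ ∑ i, (K.sub (S i)).g p * w i ^ 2 := by
  have hopt : ∀ i, ∃ z ∈ stdSimplex ℝ (S i), (K.sub (S i)).quad p z = (K.sub (S i)).g p :=
    fun i => have := (hne i).to_subtype; (K.sub (S i)).exists_quad_eq_g p
  choose z hz hzq using hopt
  let y : V → ℝ := fun v => ∑ i, if h : v ∈ S i then w i * z i ⟨v, h⟩ else 0
  have hy : ∀ i (u : S i), y u = w i * z i u := fun i u => by
    refine (sum_eq_single i (fun j _ hji => dif_neg fun h => ?_) (by simp)).trans (dif_pos u.2)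
    exact disjoint_left.1 (hdisj hji.symm) u.2 h
  have hymem : y ∈ stdSimplex ℝ V := by
    refine ⟨fun v => sum_nonneg fun i _ => ?_, ?_⟩
    · split_ifs
      exacts [mul_nonneg (hw.1 i) ((hz i).1 _), le_rfl]
    · calc ∑ v, y v = ∑ i, ∑ u : S i, y u := by
            simp only [sum_coe_sort]; exact sum_eq_sum_sum_parts hdisj hcover y
        _ = ∑ i, w i := sum_congr rfl fun i _ => by simp only [hy, ← mul_sum, (hz i).2, mul_one]
        _ = 1 := hw.2
  calc K.g p ≤ K.quad p y := K.g_le_quad p hymem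
    _ = ∑ i, (K.sub (S i)).quad p (w i • z i) := by
        rw [quad_eq_sum_sub_quad K p hdisj hcover hgray]
        exact sum_congr rfl fun i _ => congrArg _ (funext (hy i))
    _ = ∑ i, (K.sub (S i)).g p * w i ^ 2 := by simp only [quad_smul, hzq, mul_comm]

end Partition

end CRG

theorem g_of_components {V : Type} [Fintype V] [DecidableEq V] [Nonempty V]
    (p : ℝ) (hp : p ∈ Set.Ioo (0 : ℝ) 1) (K : CRG V)
    (ℓ : ℕ) (S : Fin ℓ → Finset V)
    (hne : ∀ i, (S i).Nonempty)
    (hdisj : ∀ i j, i ≠ j → Disjoint (S i) (S j))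
    (hcover : ∀ v : V, ∃ i, v ∈ S i)
    (hgray : ∀ i j, i ≠ j → ∀ u ∈ S i, ∀ v ∈ S j, K.ecolor u v = EColor.gray) :
    0 < K.g p ∧ (∀ i, 0 < (K.sub (S i)).g p) ∧
      (K.g p)⁻¹ = ∑ i, ((K.sub (S i)).g p)⁻¹ := by
  have hdisj' : Pairwise (Disjoint on S) := fun i j => hdisj i j
  have hsub : ∀ i, 0 < (K.sub (S i)).g p := fun i =>
    have := (hne i).to_subtype
    (K.sub (S i)).g_pos p hp
  refine ⟨K.g_pos p hp, hsub, ?_⟩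
  set T := ∑ i, ((K.sub (S i)).g p)⁻¹
  obtain ⟨i₀, -⟩ := hcover (Classical.arbitrary V)
  have hT : 0 < T := sum_pos (fun i _ => inv_pos.2 (hsub i)) ⟨i₀, mem_univ _⟩
  have hw : (fun i => ((K.sub (S i)).g p)⁻¹ / T) ∈ stdSimplex ℝ (Fin ℓ) :=
    ⟨fun i => div_nonneg (inv_pos.2 (hsub i)).le hT.le, by rw [← sum_div, div_self hT.ne']⟩
  rw [← inv_inv T]
  congr 1
  refine le_antisymm ?_ (K.inv_sum_inv_g_sub_le_g hp hne hdisj' hcover hgray)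
  calc K.g p ≤ ∑ i, (K.sub (S i)).g p * (((K.sub (S i)).g p)⁻¹ / T) ^ 2 :=
        K.g_le_sum_g_sub_mul_sq p hne hdisj' hcover hgray hw
    _ = T⁻¹ := sum_mul_sq_inv_div_sum_inv _ fun i _ => (hsub i).ne'
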